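/- Let f : ℝ → ℝ be continuous with f(t) = 0 for t ≤ 0 and f(t) > 0 for t > 0, F(t) = ∫₀ᵗ f(s) ds, and α ∈ (0,2). If f(t) = o(t^{1+α/2}) as t → 0⁺ and F(t)/(f(t)t) → 0 as t → +∞, then for every ε > 0 there exists C_ε > 0 such that F(t) ≤ ε f(t) t + C_ε t^{2+α/2} for all t > 0. -/
import Mathlib


open Filter

theorem F_le_eps_f_add_C (f F : ℝ → ℝ) (α : ℝ)
    (hα : 0 < α ∧ α < 2)
    (hf : Continuous f) (hf0 : ∀ t ≤ 0, f t = 0) (hfpos : ∀ t > (0:ℝ), 0 < f t)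
    (hF : ∀ t, F t = ∫ s in (0:ℝ)..t, f s)
    (hzero : Tendsto (fun t => f t / t ^ (1 + α / 2)) (nhdsWithin 0 (Set.Ioi 0)) (nhds 0))
    (hinfty : Tendsto (fun t => F t / (f t * t)) atTop (nhds 0)) :
    ∀ ε > (0:ℝ), ∃ C > (0:ℝ), ∀ t > (0:ℝ),
      F t ≤ ε * f t * t + C * t ^ (2 + α / 2) := by
  intro ε hε
  obtain ⟨hα0, hα2⟩ := hα
  have hfnn : ∀ s, 0 ≤ f s := by
    intro s
    rcases le_or_gt s 0 with h | h
    · exact (hf0 s h).ge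
    · exact (hfpos s h).le
  have hea : (0:ℝ) < 1 + α / 2 := by linarith
  have hp : (0:ℝ) < 2 + α / 2 := by linarith
  have hFnn : ∀ t, 0 ≤ t → 0 ≤ F t := by
    intro t ht
    rw [hF]
    exact intervalIntegral.integral_nonneg ht (fun s _ => hfnn s)
  have hFcont : Continuous F := by
    have : F = fun t => ∫ s in (0:ℝ)..t, f s := funext hF
    rw [this]
    exact intervalIntegral.continuous_primitive (fun a b => hf.intervalIntegrable a b) 0
  -- δ from hzero
  rw [Metric.tendsto_nhdsWithin_nhds] at hzero
  obtain ⟨δ, hδ0, hδ⟩ := hzero 1 one_pos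
  -- T from hinfty
  rw [Metric.tendsto_atTop] at hinfty
  obtain ⟨T0, hT0⟩ := hinfty ε hε
  set T : ℝ := max T0 (δ / 2) with hTdef
  have hδ2T : δ / 2 ≤ T := le_max_right _ _
  -- max of F on [δ/2, T]
  obtain ⟨x, hxmem, hxmax⟩ := isCompact_Icc.exists_isMaxOn (Set.nonempty_Icc.2 hδ2T)
    hFcont.continuousOn
  set M : ℝ := F x with hMdef
  have hM0 : 0 ≤ M := hFnn x (le_trans (by linarith) hxmem.1)
  have hden : (0:ℝ) < (δ / 2) ^ (2 + α / 2) := Real.rpow_pos_of_pos (by linarith) _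
  refine ⟨1 + M / (δ / 2) ^ (2 + α / 2), by positivity, ?_⟩
  intro t ht
  have htp : (0:ℝ) ≤ t ^ (2 + α / 2) := Real.rpow_nonneg ht.le _
  have hεft : 0 ≤ ε * f t * t := by
    have := hfnn t
    positivity
  by_cases hcase1 : t < δ
  · -- small t : F t ≤ t ^ (2 + α/2)
    have key : ∀ s ∈ Set.Icc (0:ℝ) t, f s ≤ t ^ (1 + α / 2) := by
      intro s hs
      rcases le_or_gt s 0 with h | h
      · rw [hf0 s h]; exact Real.rpow_nonneg ht.le _
      · have h1 : |f s / s ^ (1 + α / 2)| < 1 := by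
          have := hδ (Set.mem_Ioi.2 h) (by
            rw [Real.dist_eq, sub_zero, abs_of_pos h]
            exact lt_of_le_of_lt hs.2 hcase1)
          rwa [Real.dist_eq, sub_zero] at this
        have hsp : (0:ℝ) < s ^ (1 + α / 2) := Real.rpow_pos_of_pos h _
        have h2 : f s / s ^ (1 + α / 2) < 1 := lt_of_abs_lt h1
        have h3 : f s < s ^ (1 + α / 2) := by
          rw [div_lt_one hsp] at h2; exact h2
        calc f s ≤ s ^ (1 + α / 2) := h3.le
          _ ≤ t ^ (1 + α / 2) := Real.rpow_le_rpow h.le hs.2 hea.le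
    have hFt : F t ≤ t ^ (2 + α / 2) := by
      rw [hF]
      calc (∫ s in (0:ℝ)..t, f s) ≤ ∫ _s in (0:ℝ)..t, t ^ (1 + α / 2) :=
            intervalIntegral.integral_mono_on ht.le (hf.intervalIntegrable 0 t)
              (intervalIntegrable_const) key
        _ = t * t ^ (1 + α / 2) := by
            rw [intervalIntegral.integral_const, smul_eq_mul, sub_zero]
        _ = t ^ (2 + α / 2) := by
            have h := Real.rpow_add ht 1 (1 + α / 2)
            rw [Real.rpow_one] at h
            rw [show (2 + α / 2 : ℝ) = 1 + (1 + α / 2) by ring, h]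
    have hC1 : t ^ (2 + α / 2) ≤ (1 + M / (δ / 2) ^ (2 + α / 2)) * t ^ (2 + α / 2) := by
      nlinarith [div_nonneg hM0 hden.le]
    linarith
  · push_neg at hcase1
    by_cases hcase2 : T ≤ t
    · -- large t : F t ≤ ε * f t * t
      have h1 : |F t / (f t * t)| < ε := by
        have := hT0 t (le_trans (le_max_left _ _) hcase2)
        rwa [Real.dist_eq, sub_zero] at this
      have hft : (0:ℝ) < f t * t := mul_pos (hfpos t ht) ht
      have h2 : F t / (f t * t) < ε := lt_of_abs_lt h1
      have h3 : F t < ε * (f t * t) := by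
        rw [div_lt_iff₀ hft] at h2; linarith [h2]
      have hC : 0 ≤ (1 + M / (δ / 2) ^ (2 + α / 2)) * t ^ (2 + α / 2) := by
        have := div_nonneg hM0 hden.le
        positivity
      calc F t ≤ ε * (f t * t) := h3.le
        _ = ε * f t * t := by ring
        _ ≤ ε * f t * t + (1 + M / (δ / 2) ^ (2 + α / 2)) * t ^ (2 + α / 2) := by linarith
    · -- middle : δ/2 ≤ t ≤ T
      push_neg at hcase2
      have htmem : t ∈ Set.Icc (δ / 2) T := ⟨by linarith, hcase2.le⟩
      have hFt : F t ≤ M := hxmax htmem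
      have hpow : (δ / 2) ^ (2 + α / 2) ≤ t ^ (2 + α / 2) :=
        Real.rpow_le_rpow (by linarith) (by linarith) hp.le
      have h4 : M ≤ (M / (δ / 2) ^ (2 + α / 2)) * t ^ (2 + α / 2) := by
        calc M = (M / (δ / 2) ^ (2 + α / 2)) * (δ / 2) ^ (2 + α / 2) := by
              field_simp
          _ ≤ (M / (δ / 2) ^ (2 + α / 2)) * t ^ (2 + α / 2) :=
              mul_le_mul_of_nonneg_left hpow (div_nonneg hM0 hden.le)
      have h5 : (M / (δ / 2) ^ (2 + α / 2)) * t ^ (2 + α / 2) ≤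
          (1 + M / (δ / 2) ^ (2 + α / 2)) * t ^ (2 + α / 2) := by
        nlinarith
      linarith
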